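/- arXiv:math/0501436 — 3 statements merged into one kernel-verified Lean document; each statement's English description precedes it below -/
import Mathlib

section
/- The tensor product A ⊗ B, as a join-semilattice with zero, is a lattice if and only if it is closed under finite intersection (i.e., the intersection of any two compact bi-ideals, taken as sets, is again a compact bi-ideal). -/
variable {A B : Type*} [SemilatticeSup A] [OrderBot A] [SemilatticeSup B] [OrderBot B]

/-- A bi-ideal of `A × B`: a downward closed subset containing
`∇ = (A × {0}) ∪ ({0} × B)` that is closed under lateral joins. -/
def IsBiIdeal (I : Set (A × B)) : Prop :=
  (∀ ⦃p q : A × B⦄, q ≤ p → p ∈ I → q ∈ I) ∧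
  (∀ a : A, (a, (⊥ : B)) ∈ I) ∧
  (∀ b : B, ((⊥ : A), b) ∈ I) ∧
  (∀ a₀ a₁ : A, ∀ b : B, (a₀, b) ∈ I → (a₁, b) ∈ I → (a₀ ⊔ a₁, b) ∈ I) ∧
  (∀ a : A, ∀ b₀ b₁ : B, (a, b₀) ∈ I → (a, b₁) ∈ I → (a, b₀ ⊔ b₁) ∈ I)

/-- `∇ = (A × {0}) ∪ ({0} × B)`, the least bi-ideal. -/
def nabla (A B : Type*) [SemilatticeSup A] [OrderBot A] [SemilatticeSup B] [OrderBot B] :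
    Set (A × B) := {p | p.1 = ⊥ ∨ p.2 = ⊥}

/-- The pure tensor `a ⊗ b`. -/
def pureTensor (a : A) (b : B) : Set (A × B) :=
  nabla A B ∪ {p | p.1 ≤ a ∧ p.2 ≤ b}

/-- The bi-ideal generated by a subset `X` of `A × B`. -/
def biGen (X : Set (A × B)) : Set (A × B) := ⋂₀ {K | IsBiIdeal K ∧ X ⊆ K}

/-- The join of two bi-ideals in the lattice of bi-ideals. -/
def biSup (I J : Set (A × B)) : Set (A × B) := biGen (I ∪ J)

/-- Elements of the tensor product `A ⊗ B`: the compact (finitely generated) bi-ideals. -/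
def IsTensorElt (I : Set (A × B)) : Prop := ∃ S : Finset (A × B), I = biGen ↑S

/-! Intersections of bi-ideals are bi-ideals, and every bi-ideal is the union of the principal
bi-ideals `biGen {p}` of its points, which are compact. Hence a compact bi-ideal that is a
greatest lower bound of `I` and `J` among compact bi-ideals contains every such `biGen {p}`
with `p ∈ I ∩ J`, so it is `I ∩ J` itself; conversely, if `I ∩ J` is compact it is that
greatest lower bound. -/

lemma IsBiIdeal.inter {I J : Set (A × B)} (hI : IsBiIdeal I) (hJ : IsBiIdeal J) :
    IsBiIdeal (I ∩ J) := by
  obtain ⟨hI₁, hI₂, hI₃, hI₄, hI₅⟩ := hI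
  obtain ⟨hJ₁, hJ₂, hJ₃, hJ₄, hJ₅⟩ := hJ
  exact ⟨fun _ _ hqp hp => ⟨hI₁ hqp hp.1, hJ₁ hqp hp.2⟩,
    fun a => ⟨hI₂ a, hJ₂ a⟩, fun b => ⟨hI₃ b, hJ₃ b⟩,
    fun a₀ a₁ b h₀ h₁ => ⟨hI₄ a₀ a₁ b h₀.1 h₁.1, hJ₄ a₀ a₁ b h₀.2 h₁.2⟩,
    fun a b₀ b₁ h₀ h₁ => ⟨hI₅ a b₀ b₁ h₀.1 h₁.1, hJ₅ a b₀ b₁ h₀.2 h₁.2⟩⟩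

lemma isBiIdeal_biGen (X : Set (A × B)) : IsBiIdeal (biGen X) :=
  ⟨fun _ _ hqp hp K hK => hK.1.1 hqp (hp K hK),
    fun a _ hK => hK.1.2.1 a, fun b _ hK => hK.1.2.2.1 b,
    fun a₀ a₁ b h₀ h₁ K hK =>
      hK.1.2.2.2.1 a₀ a₁ b (h₀ K hK) (h₁ K hK),
    fun a b₀ b₁ h₀ h₁ K hK =>
      hK.1.2.2.2.2 a b₀ b₁ (h₀ K hK) (h₁ K hK)⟩

lemma subset_biGen (X : Set (A × B)) : X ⊆ biGen X :=
  fun _ hp _ hK => hK.2 hp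

lemma biGen_subset {X K : Set (A × B)} (hK : IsBiIdeal K) (hXK : X ⊆ K) : biGen X ⊆ K :=
  fun _ hp => hp K ⟨hK, hXK⟩

lemma IsTensorElt.isBiIdeal {I : Set (A × B)} (hI : IsTensorElt I) : IsBiIdeal I := by
  obtain ⟨S, rfl⟩ := hI
  exact isBiIdeal_biGen _

lemma isTensorElt_biGen_singleton (p : A × B) : IsTensorElt (biGen {p}) :=
  ⟨{p}, by rw [Finset.coe_singleton]⟩

lemma IsBiIdeal.subset_of_forall_isTensorElt {I K : Set (A × B)} (hI : IsBiIdeal I)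
    (hK : ∀ L : Set (A × B), IsTensorElt L → L ⊆ I → L ⊆ K) : I ⊆ K := fun p hp =>
  hK _ (isTensorElt_biGen_singleton p) (biGen_subset hI (Set.singleton_subset_iff.2 hp))
    (subset_biGen _ rfl)

/-- `A ⊗ B` is a lattice iff it is closed under finite intersection. -/
theorem tensorProduct_lattice_iff_inter_closed (A B : Type*) [SemilatticeSup A]
    [OrderBot A] [SemilatticeSup B] [OrderBot B] :
    (∀ I J : Set (A × B), IsTensorElt I → IsTensorElt J →
        ∃ K : Set (A × B), IsTensorElt K ∧ K ⊆ I ∧ K ⊆ J ∧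
          ∀ L : Set (A × B), IsTensorElt L → L ⊆ I → L ⊆ J → L ⊆ K) ↔
      (∀ I J : Set (A × B), IsTensorElt I → IsTensorElt J → IsTensorElt (I ∩ J)) := by
  constructor
  · intro hmeet I J hI hJ
    obtain ⟨K, hK, hKI, hKJ, hKgreatest⟩ := hmeet I J hI hJ
    have hIJ_sub_K : I ∩ J ⊆ K := (hI.isBiIdeal.inter hJ.isBiIdeal).subset_of_forall_isTensorElt
      fun L hL hLIJ => hKgreatest L hL (hLIJ.trans Set.inter_subset_left)
        (hLIJ.trans Set.inter_subset_right)
    rwa [← (Set.subset_inter hKI hKJ).antisymm hIJ_sub_K]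
  · intro hinter I J hI hJ
    exact ⟨I ∩ J, hinter I J hI hJ, Set.inter_subset_left, Set.inter_subset_right,
      fun _ _ hLI hLJ => Set.subset_inter hLI hLJ⟩
end

section
/- A one-to-one L-homomorphism f : A → B of join-semilattices with zero is a partial meet-embedding: for all n > 0 and a₀, …, a_{n−1} ∈ A, the meet a₀ ∧ ⋯ ∧ a_{n−1} exists in A if and only if f(a₀) ∧ ⋯ ∧ f(a_{n−1}) exists in B, and in that case f maps the former to the latter. -/
/-!
Iterating the defining property of an L-homomorphism along a finite nonempty family shows that
every lower bound `b` of the `f aᵢ` lies below `f x` for some common lower bound `x` of the `aᵢ`.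
Hence `f` carries a meet of the `aᵢ` to a meet of the `f aᵢ`; conversely, a meet `c` of the
`f aᵢ` lies below such an `f x`, and since an injective join-homomorphism reflects the order,
that `x` is a meet of the `aᵢ`.
-/

/-- An L-homomorphism of join-semilattices with zero: a zero-preserving
join-homomorphism `f` such that whenever `b ≤ f a₀` and `b ≤ f a₁`, there is
`x ≤ a₀, a₁` with `b ≤ f x`. -/
def IsLHom {A B : Type*} [SemilatticeSup A] [OrderBot A] [SemilatticeSup B] [OrderBot B]
    (f : A → B) : Prop :=
  f ⊥ = ⊥ ∧ (∀ a₀ a₁ : A, f (a₀ ⊔ a₁) = f a₀ ⊔ f a₁) ∧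
  (∀ a₀ a₁ : A, ∀ b : B, b ≤ f a₀ → b ≤ f a₁ → ∃ x : A, x ≤ a₀ ∧ x ≤ a₁ ∧ b ≤ f x)

namespace IsLHom

variable {A B : Type*} [SemilatticeSup A] [OrderBot A] [SemilatticeSup B] [OrderBot B]
  {f : A → B}

theorem monotone (hf : IsLHom f) : Monotone f :=
  OrderHomClass.mono (SupHom.mk f hf.2.1)

theorem le_of_map_le (hf : IsLHom f) (hinj : Function.Injective f) {x y : A}
    (h : f x ≤ f y) : x ≤ y :=
  sup_eq_right.mp (hinj (by rw [hf.2.1, sup_eq_right.mpr h]))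

theorem exists_le_mem_lowerBounds_of_mem_lowerBounds_image (hf : IsLHom f) {s : Set A}
    (hs : s.Finite) {a₀ : A} {b : B} (hb₀ : b ≤ f a₀) (hb : b ∈ lowerBounds (f '' s)) :
    ∃ x ≤ a₀, x ∈ lowerBounds s ∧ b ≤ f x := by
  induction s, hs using Set.Finite.induction_on with
  | empty => exact ⟨a₀, le_rfl, by simp, hb₀⟩
  | @insert a s _ _ ih =>
    rw [Set.image_insert_eq, lowerBounds_insert] at hb
    obtain ⟨x, hxa₀, hxs, hbx⟩ := ih hb.2
    obtain ⟨y, hyx, hya, hby⟩ := hf.2.2 x a b hbx hb.1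
    refine ⟨y, hyx.trans hxa₀, ?_, hby⟩
    rw [lowerBounds_insert]
    exact ⟨hya, fun z hz => hyx.trans (hxs hz)⟩

theorem exists_mem_lowerBounds_of_mem_lowerBounds_image (hf : IsLHom f) {s : Set A}
    (hs : s.Finite) (hne : s.Nonempty) {b : B} (hb : b ∈ lowerBounds (f '' s)) :
    ∃ x ∈ lowerBounds s, b ≤ f x := by
  obtain ⟨a₀, ha₀⟩ := hne
  obtain ⟨x, -, hx, hbx⟩ :=
    hf.exists_le_mem_lowerBounds_of_mem_lowerBounds_image hs (hb ⟨a₀, ha₀, rfl⟩) hb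
  exact ⟨x, hx, hbx⟩

theorem isGLB_image (hf : IsLHom f) {s : Set A} (hs : s.Finite) (hne : s.Nonempty) {m : A}
    (hm : IsGLB s m) : IsGLB (f '' s) (f m) := by
  refine ⟨hf.monotone.mem_lowerBounds_image hm.1, fun b hb => ?_⟩
  obtain ⟨x, hx, hbx⟩ := hf.exists_mem_lowerBounds_of_mem_lowerBounds_image hs hne hb
  exact hbx.trans (hf.monotone (hm.2 hx))

theorem exists_isGLB_of_isGLB_image (hf : IsLHom f) (hinj : Function.Injective f) {s : Set A}
    (hs : s.Finite) (hne : s.Nonempty) {c : B} (hc : IsGLB (f '' s) c) :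
    ∃ m, IsGLB s m := by
  obtain ⟨x, hx, hcx⟩ := hf.exists_mem_lowerBounds_of_mem_lowerBounds_image hs hne hc.1
  refine ⟨x, hx, fun y hy => hf.le_of_map_le hinj ?_⟩
  calc f y ≤ c := hc.2 (hf.monotone.mem_lowerBounds_image hy)
    _ ≤ f x := hcx

end IsLHom

/-- A one-to-one L-homomorphism is a partial meet-embedding: a finite nonempty
meet exists in `A` iff the meet of the images exists in `B`, and then `f` maps
the former to the latter. -/
theorem lhom_injective_partial_meet_embedding {A B : Type*} [SemilatticeSup A]
    [OrderBot A] [SemilatticeSup B] [OrderBot B] (f : A → B) (hf : IsLHom f)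
    (hinj : Function.Injective f) :
    ∀ n : ℕ, 0 < n → ∀ a : Fin n → A,
      ((∃ m : A, IsGLB (Set.range a) m) ↔
        (∃ c : B, IsGLB (Set.range (fun i => f (a i))) c)) ∧
      (∀ m : A, IsGLB (Set.range a) m →
        IsGLB (Set.range (fun i => f (a i))) (f m)) := by
  intro n hn a
  have hfin : (Set.range a).Finite := Set.finite_range a
  have hne : (Set.range a).Nonempty := Set.range_nonempty_iff_nonempty.mpr ⟨⟨0, hn⟩⟩
  rw [show Set.range (fun i => f (a i)) = f '' Set.range a from Set.range_comp f a]
  exact ⟨⟨fun ⟨m, hm⟩ => ⟨f m, hf.isGLB_image hfin hne hm⟩,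
      fun ⟨_, hc⟩ => hf.exists_isGLB_of_isGLB_image hinj hfin hne hc⟩,
    fun _ hm => hf.isGLB_image hfin hne hm⟩
end

section
/- Let A and B be lattices with zero and let C be a sub-tensor product of A and B. If a₀ ≤ a₁ and b₀ ≥ b₁ (or a₀ ≥ a₁ and b₀ ≤ b₁), and I = a₀ ⊗ b₀, J = a₁ ⊗ b₁, then the distributive law (I ∨ J) ∧ H = (I ∧ H) ∨ (J ∧ H) holds in C for every H ∈ C. -/
/-!
For a mixed pair, the set-theoretic union `a₀ ⊗ b₀ ∪ a₁ ⊗ b₁` is already a bi-ideal, so it is the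
mixed tensor `biSup`, lies in `C`, and is the join of the two tensors in `C`. Hence
`(I ∨ J) ∧ H = (I ∪ J) ∩ H = (I ∩ H) ∪ (J ∩ H)`, and the last set, being an intersection of two
members of `C`, is itself in `C` and therefore equals `(I ∧ H) ∨ (J ∧ H)`.
-/

variable {A B : Type*} [SemilatticeSup A] [OrderBot A] [SemilatticeSup B] [OrderBot B]

/-- A sub-tensor product of `A` and `B`: a set of elements of `A ⊗ B` containing
all pure and mixed tensors, closed under finite intersection, and forming a
lattice under containment. -/
def IsSubTensorProduct (C : Set (Set (A × B))) : Prop :=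
  (∀ I ∈ C, IsTensorElt I) ∧
  (∀ a : A, ∀ b : B, pureTensor a b ∈ C) ∧
  (∀ a₀ a₁ : A, ∀ b₀ b₁ : B, ((a₀ ≤ a₁ ∧ b₁ ≤ b₀) ∨ (a₁ ≤ a₀ ∧ b₀ ≤ b₁)) →
    biSup (pureTensor a₀ b₀) (pureTensor a₁ b₁) ∈ C) ∧
  (∀ I ∈ C, ∀ J ∈ C, I ∩ J ∈ C) ∧
  (∀ I ∈ C, ∀ J ∈ C, ∃ K ∈ C, I ⊆ K ∧ J ⊆ K ∧ ∀ L ∈ C, I ⊆ L → J ⊆ L → K ⊆ L)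

/-- The join of `I` and `J` in the lattice `C` (least upper bound in `C`). -/
def joinC (C : Set (Set (A × B))) (I J : Set (A × B)) : Set (A × B) :=
  ⋂₀ {K | K ∈ C ∧ I ⊆ K ∧ J ⊆ K}

/-- A congruence of the lattice `C` (ordered by containment, with meet given by
intersection and join given by `joinC`). -/
def IsCongOn (C : Set (Set (A × B))) (γ : Set (A × B) → Set (A × B) → Prop) : Prop :=
  (∀ I ∈ C, γ I I) ∧
  (∀ I ∈ C, ∀ J ∈ C, γ I J → γ J I) ∧
  (∀ I ∈ C, ∀ J ∈ C, ∀ K ∈ C, γ I J → γ J K → γ I K) ∧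
  (∀ I ∈ C, ∀ I' ∈ C, ∀ J ∈ C, ∀ J' ∈ C, γ I I' → γ J J' →
    γ (I ∩ J) (I' ∩ J') ∧ γ (joinC C I J) (joinC C I' J'))

/-- The principal congruence `Θ_C(U, V)` of the lattice `C`. -/
def princCongOn (C : Set (Set (A × B))) (U V : Set (A × B))
    (H K : Set (A × B)) : Prop :=
  ∀ γ : Set (A × B) → Set (A × B) → Prop, IsCongOn C γ → γ U V → γ H K

/-- The congruence `α □ β` on bi-ideals. -/
def boxCong (α : A → A → Prop) (β : B → B → Prop)
    (H K : Set (A × B)) : Prop :=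
  (∀ p ∈ H, ∃ q ∈ K, α p.1 q.1 ∧ β p.2 q.2) ∧
  (∀ q ∈ K, ∃ p ∈ H, α q.1 p.1 ∧ β q.2 p.2)

/-- A lattice congruence on a lattice `L`. -/
def IsLatCong {L : Type*} [Lattice L] (α : L → L → Prop) : Prop :=
  Equivalence α ∧
  ∀ x x' y y' : L, α x x' → α y y' → α (x ⊔ y) (x' ⊔ y') ∧ α (x ⊓ y) (x' ⊓ y')

/-- The principal lattice congruence `Θ(u, v)` on a lattice `L`. -/
def princCong {L : Type*} [Lattice L] (u v : L) (x y : L) : Prop :=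
  ∀ α : L → L → Prop, IsLatCong α → α u v → α x y


lemma joinC_eq_union {α β : Type*} {C : Set (Set (α × β))} {I J : Set (α × β)} (h : I ∪ J ∈ C) :
    joinC C I J = I ∪ J :=
  subset_antisymm (Set.sInter_subset_of_mem ⟨h, Set.subset_union_left, Set.subset_union_right⟩)
    (Set.subset_sInter fun _ hK => Set.union_subset hK.2.1 hK.2.2)

lemma biGen_eq_self {X : Set (A × B)} (hX : IsBiIdeal X) : biGen X = X :=
  subset_antisymm (Set.sInter_subset_of_mem ⟨hX, subset_rfl⟩) fun _ hx _ hK => hK.2 hx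

lemma mem_pureTensor {a : A} {b : B} {p : A × B} :
    p ∈ pureTensor a b ↔ p.1 = ⊥ ∨ p.2 = ⊥ ∨ (p.1 ≤ a ∧ p.2 ≤ b) := by
  simp only [pureTensor, nabla, Set.mem_union, Set.mem_ofPred_eq, or_assoc]

lemma isBiIdeal_pureTensor_union {a₀ a₁ : A} {b₀ b₁ : B} (ha : a₀ ≤ a₁) (hb : b₁ ≤ b₀) :
    IsBiIdeal (pureTensor a₀ b₀ ∪ pureTensor a₁ b₁) := by
  -- A lateral join of a point of `a₀ ⊗ b₀` with one of `a₁ ⊗ b₁` lands in `a₁ ⊗ b₁` when taken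
  -- in `A` and in `a₀ ⊗ b₀` when taken in `B`.
  simp only [IsBiIdeal, Set.mem_union, mem_pureTensor]
  refine ⟨fun p q hqp => ?_, by simp, by simp, fun x₀ x₁ y => ?_, fun x y₀ y₁ => ?_⟩
  · grind [le_bot_iff, Prod.le_def, le_trans]
  · grind [bot_sup_eq, sup_bot_eq, sup_le, le_trans]
  · grind [bot_sup_eq, sup_bot_eq, sup_le, le_trans]

lemma IsSubTensorProduct.pureTensor_union_mem {C : Set (Set (A × B))}
    (hC : IsSubTensorProduct C) {a₀ a₁ : A} {b₀ b₁ : B}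
    (hmix : (a₀ ≤ a₁ ∧ b₁ ≤ b₀) ∨ (a₁ ≤ a₀ ∧ b₀ ≤ b₁)) :
    pureTensor a₀ b₀ ∪ pureTensor a₁ b₁ ∈ C := by
  have hbi : IsBiIdeal (pureTensor a₀ b₀ ∪ pureTensor a₁ b₁) := by
    rcases hmix with ⟨ha, hb⟩ | ⟨ha, hb⟩
    · exact isBiIdeal_pureTensor_union ha hb
    · exact Set.union_comm .. ▸ isBiIdeal_pureTensor_union ha hb
  simpa only [biSup, biGen_eq_self hbi] using hC.2.2.1 a₀ a₁ b₀ b₁ hmix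

/-- For mixed tensors `I = a₀ ⊗ b₀`, `J = a₁ ⊗ b₁`, the distributive law
`(I ∨ J) ∧ H = (I ∧ H) ∨ (J ∧ H)` holds in any sub-tensor product `C`. -/
theorem mixed_distrib_in_subTensorProduct {A B : Type*} [Lattice A] [OrderBot A]
    [Lattice B] [OrderBot B] (C : Set (Set (A × B))) (hC : IsSubTensorProduct C)
    (a₀ a₁ : A) (b₀ b₁ : B)
    (hmix : (a₀ ≤ a₁ ∧ b₁ ≤ b₀) ∨ (a₁ ≤ a₀ ∧ b₀ ≤ b₁))
    (H : Set (A × B)) (hH : H ∈ C) :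
    joinC C (pureTensor a₀ b₀) (pureTensor a₁ b₁) ∩ H =
      joinC C (pureTensor a₀ b₀ ∩ H) (pureTensor a₁ b₁ ∩ H) := by
  have hIJ := hC.pureTensor_union_mem hmix
  have hIJH := hC.2.2.2.1 _ hIJ H hH
  rw [Set.union_inter_distrib_right] at hIJH
  rw [joinC_eq_union hIJ, joinC_eq_union hIJH, Set.union_inter_distrib_right]
end
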